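/- In the Poisson counterexample (λ_{2n} = n^{-3/4}, λ_{2n+1} = n^{-5/16}, X_{2n} = (Y_{2n}-λ_{2n})/√λ_{2n}), the sequence λ_{2n+1} X_{2n} does not converge to 0 almost surely; indeed on the event {Y_{2n}=1 i.o.} (which has probability 1), λ_{2n+1} X_{2n} = n^{1/16} - n^{-11/16} for infinitely many n. -/

import Mathlib

open NNReal MeasureTheory ProbabilityTheory Real Filter

/-!
Since `λ_{2n} = n^{-3/4}` is not summable and `P(Y_{2n} = 1) = λ_{2n} e^{-λ_{2n}} ≥ e^{-1} λ_{2n}`,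
the independent events `{Y_{2n} = 1}` have divergent probabilities, so by the second
Borel–Cantelli lemma almost surely infinitely many of them occur. On `{Y_{2n} = 1}` one computes
`λ_{2n+1} X_{2n} = n^{-5/16} (1 - n^{-3/4}) n^{3/8} = n^{1/16} - n^{-11/16}`, which tends to
infinity, so almost surely `λ_{2n+1} X_{2n} ≥ 1` infinitely often.
-/

lemma tsum_ofReal_exp_neg_mul_eq_top {a : ℕ → ℝ} (ha₀ : ∀ n, 0 ≤ a n) (ha₁ : ∀ n, a n ≤ 1)
    (ha : ¬ Summable a) : ∑' n, ENNReal.ofReal (exp (-a n) * a n) = ⊤ := by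
  have hlower : ∀ n, ENNReal.ofReal (exp (-1)) * ENNReal.ofReal (a n)
      ≤ ENNReal.ofReal (exp (-a n) * a n) := fun n => by
    rw [← ENNReal.ofReal_mul (exp_pos _).le]
    gcongr
    · exact ha₀ n
    · exact ha₁ n
  have hsum : ∑' n, ENNReal.ofReal (a n) = ⊤ := by
    by_contra h
    exact ha ((ENNReal.summable_toReal h).congr fun n => ENNReal.toReal_ofReal (ha₀ n))
  refine top_unique (le_trans ?_ (ENNReal.tsum_le_tsum hlower))
  rw [ENNReal.tsum_mul_left, hsum, ENNReal.mul_top (ENNReal.ofReal_pos.2 (exp_pos _)).ne']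

namespace ProbabilityTheory

variable {Ω ι β : Type*} [MeasurableSpace Ω] [MeasurableSpace β] {P : Measure Ω}

lemma iIndepFun.iIndepSet_preimage {Y : ι → Ω → β} (hY : ∀ i, Measurable (Y i))
    (h : iIndepFun Y P) {B : Set β} (hB : MeasurableSet B) :
    iIndepSet (fun i => Y i ⁻¹' B) P := by
  rw [iIndepSet_iff_meas_biInter fun i => hY i hB]
  exact fun t => h.measure_inter_preimage_eq_mul t fun _ _ => hB

lemma ae_frequently_mem_of_iIndepSet {s : ℕ → Set Ω} (hsm : ∀ n, MeasurableSet (s n))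
    (hs : iIndepSet s P) (hsum : ∑' n, P (s n) = ⊤) :
    ∀ᵐ ω ∂P, ∃ᶠ n in atTop, ω ∈ s n := by
  have := hs.isProbabilityMeasure
  simp_rw [← mem_limsup_iff_frequently_mem]
  exact (mem_ae_iff_prob_eq_one (MeasurableSet.measurableSet_limsup hsm)).2
    (measure_limsup_eq_one hsm hs hsum)

lemma measure_preimage_eq_one_of_map_eq_poissonMeasure {Y : Ω → ℕ} (hY : Measurable Y)
    {r : ℝ≥0} (hpois : P.map Y = poissonMeasure r) :
    P (Y ⁻¹' {1}) = ENNReal.ofReal (exp (-r) * r) := by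
  rw [← Measure.map_apply hY (measurableSet_singleton 1), hpois, poissonMeasure_singleton]
  simp

lemma tsum_measure_preimage_one_eq_top_of_poisson {Y : ℕ → Ω → ℕ} (hY : ∀ n, Measurable (Y n))
    {r : ℕ → ℝ≥0} (hpois : ∀ n, P.map (Y n) = poissonMeasure (r n)) {p : ℝ} (hp₀ : 0 ≤ p)
    (hp₁ : p ≤ 1) (hr : ∀ n, 1 ≤ n → (r n : ℝ) = (n : ℝ) ^ (-p)) :
    ∑' n, P (Y n ⁻¹' {1}) = ⊤ := by
  have hle : ∀ n : ℕ, ((n + 1 : ℕ) : ℝ) ^ (-p) ≤ 1 := fun n =>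
    rpow_le_one_of_one_le_of_nonpos (by simp) (neg_nonpos.2 hp₀)
  have hdiv : ¬ Summable fun n : ℕ => ((n + 1 : ℕ) : ℝ) ^ (-p) :=
    (summable_nat_add_iff (f := fun n : ℕ => (n : ℝ) ^ (-p)) 1).not.2
      (by rw [summable_nat_rpow]; linarith)
  refine top_unique ((tsum_ofReal_exp_neg_mul_eq_top (fun n => by positivity) hle hdiv).ge.trans ?_)
  calc ∑' n : ℕ, ENNReal.ofReal (exp (-((n + 1 : ℕ) : ℝ) ^ (-p)) * ((n + 1 : ℕ) : ℝ) ^ (-p))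
      = ∑' n, P (Y (n + 1) ⁻¹' {1}) := by
        congr 1 with n
        rw [measure_preimage_eq_one_of_map_eq_poissonMeasure (hY _) (hpois _), hr _ n.succ_pos]
    _ ≤ ∑' n, P (Y n ⁻¹' {1}) :=
        ENNReal.tsum_comp_le_tsum_of_injective (add_left_injective 1) _

end ProbabilityTheory

lemma rpow_mul_one_sub_div_sqrt {x : ℝ} (hx : 0 < x) :
    x ^ (-(5 : ℝ) / 16) * ((1 - x ^ (-(3 : ℝ) / 4)) / √(x ^ (-(3 : ℝ) / 4)))
      = x ^ ((1 : ℝ) / 16) - x ^ (-(11 : ℝ) / 16) := by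
  have hsqrt : √(x ^ (-(3 : ℝ) / 4)) = x ^ (-(3 : ℝ) / 8) := by
    rw [Real.sqrt_eq_rpow, ← rpow_mul hx.le]
    norm_num
  rw [hsqrt, mul_div_assoc', div_eq_iff (rpow_pos_of_pos hx _).ne', sub_mul, mul_sub, mul_one,
    ← rpow_add hx, ← rpow_add hx, ← rpow_add hx]
  norm_num

lemma tendsto_natCast_rpow_sub_rpow_atTop {p q : ℝ} (hp : 0 < p) (hq : q ≤ 0) :
    Tendsto (fun n : ℕ => (n : ℝ) ^ p - (n : ℝ) ^ q) atTop atTop := by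
  refine tendsto_atTop_add_right_of_le' atTop (-1)
    ((_root_.tendsto_rpow_atTop hp).comp tendsto_natCast_atTop_atTop) ?_
  filter_upwards [eventually_ge_atTop 1] with n hn
  exact neg_le_neg (rpow_le_one_of_one_le_of_nonpos (by exact_mod_cast hn) hq)

lemma not_tendsto_nhds_of_frequently_eq_of_tendsto_atTop {u v : ℕ → ℝ} {c : ℝ}
    (huv : ∃ᶠ n in atTop, u n = v n) (hv : Tendsto v atTop atTop) :
    ¬ Tendsto u atTop (nhds c) := fun hu => by
  obtain ⟨n, hn, hlt, hge⟩ :=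
    (huv.and_eventually ((hu.eventually_lt_const (lt_add_one c)).and
      (hv.eventually_ge_atTop (c + 1)))).exists
  linarith

theorem poisson_counterexample_J1_not_as
    {Ω : Type*} [MeasurableSpace Ω] (P : Measure Ω) [IsProbabilityMeasure P]
    (Y : ℕ → Ω → ℕ) (l : ℕ → ℝ≥0)
    (hmeas : ∀ n, Measurable (Y n))
    (hindep : iIndepFun Y P)
    (hpois : ∀ k, Measure.map (Y k) P = poissonMeasure (l k))
    (hl_even : ∀ n, 1 ≤ n → (l (2 * n) : ℝ) = (n : ℝ) ^ (-(3 : ℝ) / 4))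
    (hl_odd : ∀ n, 1 ≤ n → (l (2 * n + 1) : ℝ) = (n : ℝ) ^ (-(5 : ℝ) / 16))
    (X : ℕ → Ω → ℝ)
    (hX : ∀ k ω, X k ω = ((Y k ω : ℝ) - l k) / Real.sqrt (l k)) :
    (∀ᵐ ω ∂P, ∃ᶠ n in atTop, Y (2 * n) ω = 1 ∧
        (l (2 * n + 1) : ℝ) * X (2 * n) ω
          = (n : ℝ) ^ ((1 : ℝ) / 16) - (n : ℝ) ^ (-(11 : ℝ) / 16)) ∧
      ¬ (∀ᵐ ω ∂P, Tendsto (fun n => (l (2 * n + 1) : ℝ) * X (2 * n) ω)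
          atTop (nhds 0)) := by
  set s : ℕ → Set Ω := fun n => Y (2 * n) ⁻¹' {1}
  have hsm : ∀ n, MeasurableSet (s n) := fun n => hmeas _ (measurableSet_singleton 1)
  have hsi : iIndepSet s P :=
    (hindep.iIndepSet_preimage hmeas (measurableSet_singleton 1)).precomp
      (g := (2 * ·)) (mul_right_injective₀ two_ne_zero)
  have hsum : ∑' n, P (s n) = ⊤ :=
    tsum_measure_preimage_one_eq_top_of_poisson (fun n => hmeas _) (fun n => hpois _)
      (p := 3 / 4) (by norm_num) (by norm_num) fun n hn => by rw [hl_even n hn, neg_div]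
  have hfirst : ∀ᵐ ω ∂P, ∃ᶠ n in atTop, Y (2 * n) ω = 1 ∧
      (l (2 * n + 1) : ℝ) * X (2 * n) ω
        = (n : ℝ) ^ ((1 : ℝ) / 16) - (n : ℝ) ^ (-(11 : ℝ) / 16) := by
    filter_upwards [ae_frequently_mem_of_iIndepSet hsm hsi hsum] with ω hω
    refine (hω.and_eventually (eventually_ge_atTop 1)).mono fun n ⟨hY, hn⟩ => ⟨hY, ?_⟩
    rw [hX, hY, hl_even n hn, hl_odd n hn, Nat.cast_one]
    exact rpow_mul_one_sub_div_sqrt (by exact_mod_cast hn)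
  refine ⟨hfirst, fun htend => ?_⟩
  obtain ⟨ω, hωf, hωt⟩ := (hfirst.and htend).exists
  exact not_tendsto_nhds_of_frequently_eq_of_tendsto_atTop (hωf.mono fun _ h => h.2)
    (tendsto_natCast_rpow_sub_rpow_atTop (by norm_num) (by norm_num)) hωt
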